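/- The subspace Λ³₄₈ = {γ ∈ Λ³(ℝ⁸)* : γ ∧ Φ₀ = 0} has dimension 48, and Λ³(ℝ⁸)* = Λ³₈ ⊕ Λ³₄₈ where Λ³₈ = {∗(β∧Φ₀) : β ∈ Λ¹(ℝ⁸)*}. -/
import Mathlib


open Finset

set_option maxRecDepth 100000
set_option maxHeartbeats 1000000
set_option synthInstance.maxHeartbeats 400000

namespace Spin7

/-- The exterior algebra of `ℝⁿ` modeled as coefficient functions on subsets of `Fin n`:
`a S` is the coefficient of `dx^S` (indices in increasing order). -/
abbrev Ext (n : ℕ) := Finset (Fin n) → ℝ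

variable {n : ℕ}

/-- The sign `(-1)^{#{(s,t) ∈ S×T : t < s}}` arising when concatenating the increasing
enumerations of `S` and `T` and reordering. -/
noncomputable def msign (S T : Finset (Fin n)) : ℝ :=
  (-1 : ℝ) ^ (((S ×ˢ T).filter (fun p => p.2 < p.1)).card)

/-- The wedge product. -/
noncomputable def wedge (a b : Ext n) : Ext n :=
  fun U => ∑ S ∈ U.powerset, msign S (U \ S) * a S * b (U \ S)

/-- The Hodge star operator for the standard Euclidean metric and orientation. -/
noncomputable def hstar (a : Ext n) : Ext n :=
  fun U => msign Uᶜ U * a Uᶜ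

/-- The basic 1-form `dxⁱ`. -/
def dx (i : Fin n) : Ext n := fun U => if U = {i} then 1 else 0

/-- The standard volume form `dx¹ ∧ ⋯ ∧ dxⁿ`. -/
def vol : Ext n := fun U => if U = univ then 1 else 0

/-- Interior product with the vector `v`. -/
noncomputable def iprod (v : Fin n → ℝ) (a : Ext n) : Ext n :=
  fun U => ∑ i ∈ Uᶜ, v i * msign {i} U * a (insert i U)

/-- The standard inner product on forms (the `dx^S` are orthonormal). -/
noncomputable def formInner (a b : Ext n) : ℝ := ∑ U, a U * b U

/-- `a` is a homogeneous form of degree `k`. -/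
def isForm (k : ℕ) (a : Ext n) : Prop := ∀ U, U.card ≠ k → a U = 0

/-- `dxⁱ ∧ dxʲ ∧ dxᵏ ∧ dxˡ`. -/
noncomputable def dx4 (i j k l : Fin 8) : Ext 8 :=
  wedge (dx i) (wedge (dx j) (wedge (dx k) (dx l)))

/-- The standard Cayley 4-form `Φ₀` on `ℝ⁸` (coordinates indexed `0,…,7` instead of `1,…,8`). -/
noncomputable def Φ₀ : Ext 8 :=
  dx4 0 1 2 3 + dx4 0 1 4 5 + dx4 0 1 6 7 + dx4 0 2 4 6 - dx4 0 2 5 7 - dx4 0 3 4 7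
    - dx4 0 3 5 6 - dx4 1 2 4 7 - dx4 1 2 5 6 - dx4 1 3 4 6 + dx4 1 3 5 7 + dx4 2 3 4 5
    + dx4 2 3 6 7 + dx4 4 5 6 7

/-! ### Integer model -/

def msignZ (S T : Finset (Fin 8)) : ℤ :=
  (-1 : ℤ) ^ (((S ×ˢ T).filter (fun p => p.2 < p.1)).card)

def indZ (Q : Finset (Fin 8)) : Finset (Fin 8) → ℤ := fun U => if U = Q then 1 else 0

def toR (a : Finset (Fin 8) → ℤ) : Ext 8 := fun U => (a U : ℝ)

/-- indicator real form -/
noncomputable def ind (Q : Finset (Fin n)) : Ext n := fun U => if U = Q then 1 else 0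

lemma msign_cast (S T : Finset (Fin 8)) : msign S T = ((msignZ S T : ℤ) : ℝ) := by
  simp [msign, msignZ]

lemma ind_cast (Q : Finset (Fin 8)) : ind Q = toR (indZ Q) := by
  funext U; simp [ind, indZ, toR, apply_ite (Int.cast : ℤ → ℝ)]

lemma toR_add (x y : Finset (Fin 8) → ℤ) : toR x + toR y = toR (x + y) := by
  funext U; simp [toR]

lemma toR_sub (x y : Finset (Fin 8) → ℤ) : toR x - toR y = toR (x - y) := by
  funext U; simp [toR]

/-! ### wedge linearity -/

lemma wedge_add_left (a b c : Ext n) : wedge (a + b) c = wedge a c + wedge b c := by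
  funext U
  simp only [wedge, Pi.add_apply, ← Finset.sum_add_distrib]
  exact Finset.sum_congr rfl fun S _ => by ring

lemma wedge_sub_left (a b c : Ext n) : wedge (a - b) c = wedge a c - wedge b c := by
  funext U
  simp only [wedge, Pi.sub_apply, ← Finset.sum_sub_distrib]
  exact Finset.sum_congr rfl fun S _ => by ring

lemma wedge_smul_left (r : ℝ) (a c : Ext n) : wedge (r • a) c = r • wedge a c := by
  funext U
  simp only [wedge, Pi.smul_apply, smul_eq_mul, Finset.mul_sum]
  exact Finset.sum_congr rfl fun S _ => by ring

lemma wedge_add_right (a b c : Ext n) : wedge a (b + c) = wedge a b + wedge a c := by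
  funext U
  simp only [wedge, Pi.add_apply, ← Finset.sum_add_distrib]
  exact Finset.sum_congr rfl fun S _ => by ring

lemma wedge_sub_right (a b c : Ext n) : wedge a (b - c) = wedge a b - wedge a c := by
  funext U
  simp only [wedge, Pi.sub_apply, ← Finset.sum_sub_distrib]
  exact Finset.sum_congr rfl fun S _ => by ring

lemma wedge_sum_left {ι : Type*} (s : Finset ι) (f : ι → Ext n) (c : Ext n) :
    wedge (∑ i ∈ s, f i) c = ∑ i ∈ s, wedge (f i) c := by
  induction s using Finset.cons_induction with
  | empty =>
      funext U
      simp [wedge]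
  | cons i s hi ih =>
      rw [Finset.sum_cons, Finset.sum_cons, wedge_add_left, ih]

lemma hstar_add (a b : Ext n) : hstar (a + b) = hstar a + hstar b := by
  funext U; simp [hstar]; ring

lemma hstar_smul (r : ℝ) (a : Ext n) : hstar (r • a) = r • hstar a := by
  funext U; simp [hstar]; ring

lemma hstar_sum {ι : Type*} (s : Finset ι) (f : ι → Ext n) :
    hstar (∑ i ∈ s, f i) = ∑ i ∈ s, hstar (f i) := by
  induction s using Finset.cons_induction with
  | empty => funext U; simp [hstar]
  | cons i s hi ih => rw [Finset.sum_cons, Finset.sum_cons, hstar_add, ih]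


/-- evaluation of `dx i ∧ a`. -/
lemma wedge_dx (i : Fin n) (a : Ext n) (U : Finset (Fin n)) :
    wedge (dx i) a U = if i ∈ U then msign {i} (U.erase i) * a (U.erase i) else 0 := by
  unfold wedge
  rw [Finset.sum_congr rfl (fun S _ => show msign S (U \ S) * dx i S * a (U \ S)
      = if S = {i} then msign S (U \ S) * a (U \ S) else 0 from by
        by_cases h : S = {i} <;> simp [dx, h])]
  rw [Finset.sum_ite_eq' U.powerset ({i} : Finset (Fin n))
      (fun S => msign S (U \ S) * a (U \ S))]
  rw [Finset.erase_eq]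
  congr 1
  · simp [Finset.mem_powerset, Finset.singleton_subset_iff]

lemma msign_one_of (i : Fin n) (Q : Finset (Fin n)) (h : ∀ t ∈ Q, i < t) :
    msign {i} Q = 1 := by
  unfold msign
  have : (({i} ×ˢ Q).filter (fun p => p.2 < p.1)) = ∅ := by
    ext p
    simp only [Finset.mem_filter, Finset.mem_product, Finset.mem_singleton,
      Finset.notMem_empty, iff_false]
    rintro ⟨⟨hp1, hp2⟩, hlt⟩
    exact absurd hlt (not_lt.2 (le_of_lt (hp1 ▸ h p.2 hp2)))
  rw [this]
  simp

lemma wedge_dx_ind (k : Fin n) (Q : Finset (Fin n)) (h : ∀ t ∈ Q, k < t) :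
    wedge (dx k) (ind Q) = ind (insert k Q) := by
  have hk : k ∉ Q := fun hmem => lt_irrefl k (h k hmem)
  funext U
  rw [wedge_dx]
  by_cases hU : U = insert k Q
  · subst hU
    rw [if_pos (Finset.mem_insert_self k Q), Finset.erase_insert hk,
      msign_one_of k Q h]
    simp [ind]
  · rw [show ind (insert k Q) U = 0 from by simp [ind, hU]]
    by_cases hkU : k ∈ U
    · rw [if_pos hkU]
      have : U.erase k ≠ Q := by
        intro hEQ
        exact hU (by rw [← hEQ, Finset.insert_erase hkU])
      simp [ind, this]
    · rw [if_neg hkU]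

/-- evaluation of `a ∧ ind Q`. -/
lemma wedge_ind_right (a : Ext n) (Q : Finset (Fin n)) (U : Finset (Fin n)) :
    wedge a (ind Q) U = if Q ⊆ U then msign (U \ Q) Q * a (U \ Q) else 0 := by
  unfold wedge
  by_cases hQ : Q ⊆ U
  · rw [if_pos hQ]
    rw [Finset.sum_eq_single_of_mem (U \ Q) (Finset.mem_powerset.2 (Finset.sdiff_subset))]
    · rw [Finset.sdiff_sdiff_eq_self hQ]
      simp [ind]
    · intro S hS hne
      have hSU : S ⊆ U := Finset.mem_powerset.1 hS
      have : ind Q (U \ S) = 0 := by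
        have : U \ S ≠ Q := by
          intro hEQ
          apply hne
          rw [← hEQ, Finset.sdiff_sdiff_eq_self hSU]
        simp [ind, this]
      rw [this, mul_zero]
  · rw [if_neg hQ]
    apply Finset.sum_eq_zero
    intro S hS
    have : ind Q (U \ S) = 0 := by
      have : U \ S ≠ Q := fun hEQ => hQ (hEQ ▸ Finset.sdiff_subset)
      simp [ind, this]
    rw [this, mul_zero]

/-- degree of a wedge product -/
lemma isForm_wedge {k l : ℕ} {a b : Ext n} (ha : isForm k a) (hb : isForm l b) :
    isForm (k + l) (wedge a b) := by
  intro U hU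
  apply Finset.sum_eq_zero
  intro S hS
  have hSU : S ⊆ U := Finset.mem_powerset.1 hS
  by_cases hk : S.card = k
  · have : (U \ S).card ≠ l := by
      intro hl
      apply hU
      rw [← Finset.card_sdiff_add_card_eq_card hSU, hl, hk, Nat.add_comm]
    rw [hb _ this, mul_zero]
  · rw [ha _ hk, mul_zero, zero_mul]



lemma dx4_eq (i j k l : Fin 8) (hij : i < j) (hjk : j < k) (hkl : k < l) :
    dx4 i j k l = ind {i, j, k, l} := by
  unfold dx4
  rw [show dx l = ind {l} from rfl,
    wedge_dx_ind k {l} (by intro t ht; rw [Finset.mem_singleton] at ht; exact ht ▸ hkl),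
    wedge_dx_ind j {k, l} (by
      intro t ht
      rcases Finset.mem_insert.1 ht with h | h
      · exact h ▸ hjk
      · rw [Finset.mem_singleton] at h; exact h ▸ lt_trans hjk hkl),
    wedge_dx_ind i {j, k, l} (by
      intro t ht
      rcases Finset.mem_insert.1 ht with h | h
      · exact h ▸ hij
      rcases Finset.mem_insert.1 h with h | h
      · exact h ▸ lt_trans hij hjk
      · rw [Finset.mem_singleton] at h; exact h ▸ lt_trans hij (lt_trans hjk hkl))]

lemma Phi_eq_ind : Φ₀ = ind ({0,1,2,3} : Finset (Fin 8)) + ind ({0,1,4,5} : Finset (Fin 8)) + ind ({0,1,6,7} : Finset (Fin 8)) + ind ({0,2,4,6} : Finset (Fin 8)) - ind ({0,2,5,7} : Finset (Fin 8)) - ind ({0,3,4,7} : Finset (Fin 8)) - ind ({0,3,5,6} : Finset (Fin 8)) - ind ({1,2,4,7} : Finset (Fin 8)) - ind ({1,2,5,6} : Finset (Fin 8)) - ind ({1,3,4,6} : Finset (Fin 8)) + ind ({1,3,5,7} : Finset (Fin 8)) + ind ({2,3,4,5} : Finset (Fin 8)) + ind ({2,3,6,7} : Finset (Fin 8)) +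 ind ({4,5,6,7} : Finset (Fin 8)) := by
  unfold Φ₀
  rw [dx4_eq 0 1 2 3 (by decide) (by decide) (by decide),
    dx4_eq 0 1 4 5 (by decide) (by decide) (by decide),
    dx4_eq 0 1 6 7 (by decide) (by decide) (by decide),
    dx4_eq 0 2 4 6 (by decide) (by decide) (by decide),
    dx4_eq 0 2 5 7 (by decide) (by decide) (by decide),
    dx4_eq 0 3 4 7 (by decide) (by decide) (by decide),
    dx4_eq 0 3 5 6 (by decide) (by decide) (by decide),
    dx4_eq 1 2 4 7 (by decide) (by decide) (by decide),
    dx4_eq 1 2 5 6 (by decide) (by decide) (by decide),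
    dx4_eq 1 3 4 6 (by decide) (by decide) (by decide),
    dx4_eq 1 3 5 7 (by decide) (by decide) (by decide),
    dx4_eq 2 3 4 5 (by decide) (by decide) (by decide),
    dx4_eq 2 3 6 7 (by decide) (by decide) (by decide),
    dx4_eq 4 5 6 7 (by decide) (by decide) (by decide)]

def PhiZ : Finset (Fin 8) → ℤ := indZ ({0,1,2,3} : Finset (Fin 8)) + indZ ({0,1,4,5} : Finset (Fin 8)) + indZ ({0,1,6,7} : Finset (Fin 8)) + indZ ({0,2,4,6} : Finset (Fin 8)) - indZ ({0,2,5,7} : Finset (Fin 8)) - indZ ({0,3,4,7} : Finset (Fin 8)) - indZ ({0,3,5,6} : Finset (Fin 8)) - indZ ({1,2,4,7} : Finset (Fin 8)) - indZ ({1,2,5,6} : Finset (Fin 8)) - indZ ({1,3,4,6} : Finset (Fin 8)) + indZ ({1,3,5,7} : Finset (Fin 8)) + indZ ({2,3,4,5} : Finset (Fin 8)) + indZ ({2,3,6,7} : Finset (Fin 8)) + indZ ({4,5,6,7} : Finset (Fin 8))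

lemma Phi_cast : Φ₀ = toR PhiZ := by
  rw [Phi_eq_ind]
  simp only [ind_cast, toR_add, toR_sub]
  rfl

/-- fast integer formula for `∗(dxⁱ ∧ Φ₀)` -/
def EZf (i : Fin 8) : Finset (Fin 8) → ℤ :=
  fun U => msignZ Uᶜ U * (if i ∈ Uᶜ then msignZ {i} (Uᶜ.erase i) * PhiZ (Uᶜ.erase i) else 0)

lemma hE (i : Fin 8) : hstar (wedge (dx i) Φ₀) = toR (EZf i) := by
  funext U
  unfold hstar
  rw [wedge_dx, Phi_cast]
  by_cases h : i ∈ Uᶜ <;> simp [EZf, toR, h, msign_cast]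

lemma isForm_E (i : Fin 8) : isForm 3 (toR (EZf i)) := by
  intro U hU
  have h : ∀ (i : Fin 8) (U : Finset (Fin 8)), U.card ≠ 3 → EZf i U = 0 := by decide
  simp [toR, h i U hU]

/-- fast integer formula for `(∗(dxⁱ ∧ Φ₀)) ∧ Φ₀` -/
def WfZ (i : Fin 8) : Finset (Fin 8) → ℤ :=
  fun U => (if ({0,1,2,3} : Finset (Fin 8)) ⊆ U then msignZ (U \ {0,1,2,3}) {0,1,2,3} * EZf i (U \ {0,1,2,3}) else 0) +
      (if ({0,1,4,5} : Finset (Fin 8)) ⊆ U then msignZ (U \ {0,1,4,5}) {0,1,4,5} * EZf i (U \ {0,1,4,5}) else 0) +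
      (if ({0,1,6,7} : Finset (Fin 8)) ⊆ U then msignZ (U \ {0,1,6,7}) {0,1,6,7} * EZf i (U \ {0,1,6,7}) else 0) +
      (if ({0,2,4,6} : Finset (Fin 8)) ⊆ U then msignZ (U \ {0,2,4,6}) {0,2,4,6} * EZf i (U \ {0,2,4,6}) else 0) -
      (if ({0,2,5,7} : Finset (Fin 8)) ⊆ U then msignZ (U \ {0,2,5,7}) {0,2,5,7} * EZf i (U \ {0,2,5,7}) else 0) -
      (if ({0,3,4,7} : Finset (Fin 8)) ⊆ U then msignZ (U \ {0,3,4,7}) {0,3,4,7} * EZf i (U \ {0,3,4,7}) else 0) -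
      (if ({0,3,5,6} : Finset (Fin 8)) ⊆ U then msignZ (U \ {0,3,5,6}) {0,3,5,6} * EZf i (U \ {0,3,5,6}) else 0) -
      (if ({1,2,4,7} : Finset (Fin 8)) ⊆ U then msignZ (U \ {1,2,4,7}) {1,2,4,7} * EZf i (U \ {1,2,4,7}) else 0) -
      (if ({1,2,5,6} : Finset (Fin 8)) ⊆ U then msignZ (U \ {1,2,5,6}) {1,2,5,6} * EZf i (U \ {1,2,5,6}) else 0) -
      (if ({1,3,4,6} : Finset (Fin 8)) ⊆ U then msignZ (U \ {1,3,4,6}) {1,3,4,6} * EZf i (U \ {1,3,4,6}) else 0) +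
      (if ({1,3,5,7} : Finset (Fin 8)) ⊆ U then msignZ (U \ {1,3,5,7}) {1,3,5,7} * EZf i (U \ {1,3,5,7}) else 0) +
      (if ({2,3,4,5} : Finset (Fin 8)) ⊆ U then msignZ (U \ {2,3,4,5}) {2,3,4,5} * EZf i (U \ {2,3,4,5}) else 0) +
      (if ({2,3,6,7} : Finset (Fin 8)) ⊆ U then msignZ (U \ {2,3,6,7}) {2,3,6,7} * EZf i (U \ {2,3,6,7}) else 0) +
      (if ({4,5,6,7} : Finset (Fin 8)) ⊆ U then msignZ (U \ {4,5,6,7}) {4,5,6,7} * EZf i (U \ {4,5,6,7}) else 0)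

lemma wedge_E_Phi (i : Fin 8) : wedge (toR (EZf i)) Φ₀ = toR (WfZ i) := by
  rw [Phi_eq_ind]
  funext U
  simp only [wedge_add_right, wedge_sub_right, Pi.add_apply, Pi.sub_apply,
    wedge_ind_right, msign_cast, toR, WfZ]
  push_cast [apply_ite (Int.cast : ℤ → ℝ)]
  ring

lemma WfZ_val : ∀ i j : Fin 8, WfZ i ({j}ᶜ) = if i = j then 7 * (-1) ^ (i : ℕ) else 0 := by
  decide

lemma wedge_E_val (i j : Fin 8) :
    wedge (toR (EZf i)) Φ₀ ({j}ᶜ) = if i = j then 7 * (-1) ^ (i : ℕ) else 0 := by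
  have h := congrFun (wedge_E_Phi i) ({j}ᶜ)
  rw [h, show toR (WfZ i) ({j}ᶜ) = ((WfZ i ({j}ᶜ) : ℤ) : ℝ) from rfl, WfZ_val i j]
  by_cases hij : i = j <;> simp [hij]

/-! ### form degree helpers -/

lemma isForm_sub {k : ℕ} {a b : Ext n} (ha : isForm k a) (hb : isForm k b) :
    isForm k (a - b) := fun U hU => by
  simp [Pi.sub_apply, ha U hU, hb U hU]

lemma isForm_smul {k : ℕ} (r : ℝ) {a : Ext n} (ha : isForm k a) : isForm k (r • a) :=
  fun U hU => by simp [Pi.smul_apply, ha U hU]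

lemma isForm_sum {k : ℕ} {ι : Type*} (s : Finset ι) {f : ι → Ext n}
    (hf : ∀ i ∈ s, isForm k (f i)) : isForm k (∑ i ∈ s, f i) := fun U hU => by
  rw [Finset.sum_apply]
  exact Finset.sum_eq_zero fun i hi => hf i hi U hU

lemma isForm_dx (i : Fin n) : isForm 1 (dx i) := fun U hU => by
  have : U ≠ {i} := fun h => hU (by simp [h])
  simp [dx, this]

lemma isForm_Phi : isForm 4 Φ₀ := by
  rw [Phi_cast]
  intro U hU
  have h : ∀ U : Finset (Fin 8), U.card ≠ 4 → PhiZ U = 0 := by decide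
  simp [toR, h U hU]

lemma exists_compl_singleton {U : Finset (Fin 8)} (hU : U.card = 7) :
    ∃ j : Fin 8, U = {j}ᶜ := by
  have hc : Uᶜ.card = 1 := by
    rw [Finset.card_compl, hU]
    rfl
  obtain ⟨j, hj⟩ := Finset.card_eq_one.1 hc
  exact ⟨j, by rw [← compl_compl U, hj]⟩

lemma wedge_Phi_eq_zero_iff {γ : Ext 8} (hγ : isForm 3 γ) :
    wedge γ Φ₀ = 0 ↔ ∀ j : Fin 8, wedge γ Φ₀ ({j}ᶜ) = 0 := by
  constructor
  · intro h j; rw [h]; rfl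
  · intro h
    funext U
    by_cases h7 : U.card = 7
    · obtain ⟨j, rfl⟩ := exists_compl_singleton h7
      exact h j
    · exact isForm_wedge hγ isForm_Phi U h7

lemma oneForm_repr {b : Ext 8} (hb : isForm 1 b) : b = ∑ i : Fin 8, b {i} • dx i := by
  funext U
  rw [Finset.sum_apply]
  by_cases h1 : U.card = 1
  · obtain ⟨j, rfl⟩ := Finset.card_eq_one.1 h1
    rw [Finset.sum_eq_single_of_mem j (Finset.mem_univ j)]
    · simp [dx]
    · intro i _ hne
      have : ({j} : Finset (Fin 8)) ≠ {i} :=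
        fun h => hne (Finset.singleton_inj.1 h).symm
      simp [dx, this]
  · rw [hb U h1]
    apply (Finset.sum_eq_zero _).symm
    intro i _
    have : U ≠ ({i} : Finset (Fin 8)) := fun h => h1 (by simp [h])
    simp [dx, this]

lemma beta_repr (c : Fin 8 → ℝ) :
    hstar (wedge (∑ i : Fin 8, c i • dx i) Φ₀) = ∑ i : Fin 8, c i • toR (EZf i) := by
  rw [wedge_sum_left, hstar_sum]
  apply Finset.sum_congr rfl
  intro i _
  rw [wedge_smul_left, hstar_smul, hE]

lemma val_sum (c : Fin 8 → ℝ) (j : Fin 8) :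
    wedge (∑ i : Fin 8, c i • toR (EZf i)) Φ₀ ({j}ᶜ) = c j * (7 * (-1) ^ (j : ℕ)) := by
  rw [wedge_sum_left, Finset.sum_apply]
  rw [Finset.sum_congr rfl (fun i _ => by
    rw [wedge_smul_left, Pi.smul_apply, smul_eq_mul, wedge_E_val i j])]
  rw [Finset.sum_congr rfl (fun i _ => show
      c i * (if i = j then 7 * (-1) ^ (i:ℕ) else 0)
        = if i = j then c i * (7 * (-1) ^ (i:ℕ)) else 0 from by
    split_ifs <;> ring)]
  rw [Finset.sum_ite_eq' Finset.univ j (fun i => c i * (7 * (-1) ^ (i : ℕ))),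
    if_pos (Finset.mem_univ j)]

lemma neg_one_sq_pow (j : ℕ) : ((-1 : ℝ)) ^ j * (-1) ^ j = 1 := by
  rw [← pow_add]
  exact Even.neg_one_pow ⟨j, rfl⟩

/-! ### the submodule of 3-forms -/

def V3 : Submodule ℝ (Ext 8) where
  carrier := {γ | isForm 3 γ}
  add_mem' := fun {a b} ha hb U hU => by simp [Pi.add_apply, ha U hU, hb U hU]
  zero_mem' := fun U _ => rfl
  smul_mem' := fun r a ha U hU => by simp [Pi.smul_apply, ha U hU]

lemma mem_V3 {γ : Ext 8} : γ ∈ V3 ↔ isForm 3 γ := Iff.rfl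

noncomputable def e3 : V3 ≃ₗ[ℝ] ({U : Finset (Fin 8) // U.card = 3} → ℝ) where
  toFun γ := fun t => γ.1 t.1
  invFun g := ⟨fun U => if h : U.card = 3 then g ⟨U, h⟩ else 0,
    fun U hU => dif_neg hU⟩
  left_inv := fun γ => by
    apply Subtype.ext
    funext U
    show (if h : U.card = 3 then γ.1 U else 0) = γ.1 U
    by_cases h : U.card = 3
    · exact dif_pos h
    · rw [dif_neg h, γ.2 U h]
  right_inv := fun g => by
    funext t
    exact dif_pos t.2
  map_add' := fun x y => rfl
  map_smul' := fun r x => rfl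

lemma finrank_V3 : Module.finrank ℝ V3 = 56 := by
  rw [LinearEquiv.finrank_eq e3, Module.finrank_fintype_fun_eq_card,
    Fintype.card_finset_len]
  rfl

noncomputable def Lmap : V3 →ₗ[ℝ] (Fin 8 → ℝ) where
  toFun γ := fun j => wedge γ.1 Φ₀ ({j}ᶜ)
  map_add' := fun x y => by
    funext j
    show wedge (x.1 + y.1) Φ₀ _ = _
    rw [wedge_add_left]
    rfl
  map_smul' := fun r x => by
    funext j
    show wedge (r • x.1) Φ₀ ({j}ᶜ) = r • (wedge x.1 Φ₀ ({j}ᶜ))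
    rw [wedge_smul_left]
    rfl

lemma Lmap_surjective : Function.Surjective Lmap := by
  intro v
  have hform : isForm 3 (∑ i : Fin 8, ((-1) ^ (i : ℕ) * v i / 7) • toR (EZf i)) :=
    isForm_sum _ fun i _ => isForm_smul _ (isForm_E i)
  refine ⟨⟨_, hform⟩, ?_⟩
  funext j
  show wedge (∑ i : Fin 8, ((-1) ^ (i : ℕ) * v i / 7) • toR (EZf i)) Φ₀ ({j}ᶜ) = v j
  rw [val_sum]
  have h2 : (-1:ℝ) ^ (j:ℕ) * v j / 7 * (7 * (-1) ^ (j:ℕ))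
      = ((-1) ^ (j:ℕ) * (-1) ^ (j:ℕ)) * v j := by ring
  rw [h2, neg_one_sq_pow, one_mul]

/-- `Λ³₄₈ = {γ ∈ Λ³ : γ ∧ Φ₀ = 0}` has dimension 48, and `Λ³ = Λ³₈ ⊕ Λ³₄₈`
where `Λ³₈ = {∗(β∧Φ₀) : β ∈ Λ¹}`. -/
theorem Lambda3_decomposition :
    Module.finrank ℝ
        (Submodule.span ℝ {γ : Ext 8 | isForm 3 γ ∧ wedge γ Φ₀ = 0}) = 48 ∧
      (∀ γ : Ext 8, isForm 3 γ → ∃ β δ : Ext 8,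
        (∃ b, isForm 1 b ∧ β = hstar (wedge b Φ₀)) ∧ isForm 3 δ ∧ wedge δ Φ₀ = 0 ∧
        γ = β + δ) ∧
      (∀ γ : Ext 8, (∃ b, isForm 1 b ∧ γ = hstar (wedge b Φ₀)) → wedge γ Φ₀ = 0 → γ = 0) := by
  refine ⟨?_, ?_, ?_⟩
  · -- dimension count
    have hset : {γ : Ext 8 | isForm 3 γ ∧ wedge γ Φ₀ = 0}
        = ↑(Submodule.map V3.subtype (LinearMap.ker Lmap)) := by
      ext γ
      simp only [Set.mem_setOf_eq, SetLike.mem_coe, Submodule.mem_map]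
      constructor
      · rintro ⟨h3, hw⟩
        refine ⟨⟨γ, h3⟩, ?_, rfl⟩
        rw [LinearMap.mem_ker]
        funext j
        show wedge γ Φ₀ ({j}ᶜ) = 0
        rw [hw]
        rfl
      · rintro ⟨y, hker, rfl⟩
        refine ⟨y.2, ?_⟩
        show wedge (y : Ext 8) Φ₀ = 0
        rw [wedge_Phi_eq_zero_iff y.2]
        intro j
        exact congrFun (LinearMap.mem_ker.1 hker) j
    have heq : Module.finrank ℝ (LinearMap.ker Lmap)
        = Module.finrank ℝ (Submodule.map V3.subtype (LinearMap.ker Lmap)) :=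
      LinearEquiv.finrank_eq (Submodule.equivMapOfInjective V3.subtype
        (Submodule.injective_subtype V3) (LinearMap.ker Lmap))
    rw [hset, Submodule.span_eq, ← heq]
    have hrn := LinearMap.finrank_range_add_finrank_ker Lmap
    rw [finrank_V3, LinearMap.range_eq_top.2 Lmap_surjective, finrank_top,
      Module.finrank_fintype_fun_eq_card, Fintype.card_fin] at hrn
    omega
  · -- decomposition
    intro γ h3
    set c : Fin 8 → ℝ := fun i => (-1) ^ (i : ℕ) * wedge γ Φ₀ ({i}ᶜ) / 7 with hc
    have hβ3 : isForm 3 (∑ i : Fin 8, c i • toR (EZf i)) :=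
      isForm_sum _ fun i _ => isForm_smul _ (isForm_E i)
    refine ⟨∑ i : Fin 8, c i • toR (EZf i), γ - ∑ i : Fin 8, c i • toR (EZf i),
      ⟨∑ i : Fin 8, c i • dx i,
        isForm_sum _ fun i _ => isForm_smul _ (isForm_dx i), (beta_repr c).symm⟩,
      isForm_sub h3 hβ3, ?_, by ring⟩
    rw [wedge_Phi_eq_zero_iff (isForm_sub h3 hβ3)]
    intro j
    rw [wedge_sub_left]
    simp only [Pi.sub_apply]
    rw [val_sum]
    have hval : c j * (7 * (-1) ^ (j : ℕ))
        = ((-1) ^ (j : ℕ) * (-1) ^ (j : ℕ)) * wedge γ Φ₀ ({j}ᶜ) := by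
      rw [hc]
      ring
    rw [hval, neg_one_sq_pow, one_mul, sub_self]
  · -- injectivity on Λ³₈
    rintro γ ⟨b, hb1, rfl⟩ hw
    have hβ : hstar (wedge b Φ₀) = ∑ i : Fin 8, b {i} • toR (EZf i) := by
      conv_lhs => rw [oneForm_repr hb1]
      rw [beta_repr]
    rw [hβ] at hw ⊢
    have hcz : ∀ j : Fin 8, b {j} = 0 := by
      intro j
      have hv := congrFun hw ({j}ᶜ)
      rw [val_sum] at hv
      have h7 : (7 : ℝ) * (-1) ^ (j : ℕ) ≠ 0 := by
        intro h
        have := neg_one_sq_pow (j : ℕ)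
        rw [show ((0:ℝ)) = 0 from rfl] at h
        nlinarith [neg_one_sq_pow (j : ℕ)]
      exact (mul_eq_zero.1 hv).resolve_right h7
    rw [Finset.sum_congr rfl fun i _ => by rw [hcz i, zero_smul]]
    simp


end Spin7
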